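/- Suppose G_1, …, G_m are finite subgraphs of the infinite path Path_ℤ with G_1 ∪ ⋯ ∪ G_m = Path_k and Δ⃗(G_1,…,G_m) = 1. Then there exists a set I ⊆ {1,…,m} containing m, with associated shift permutation σ = σ_I and induced shift permutations σ̃_j, such that λ⃗(G_{σ(1)},…,G_{σ(m)}) ≥ k/8 − (max_{j∈{1,…,m}} λ(G_j))/2, and Δ⃗(G_{σ̃_j(1)},…,G_{σ̃_j(m)}) ≥ Δ⃗(G_1,…,G_m)/2 for all j ∈ {1,…,m}. -/

import Mathlib

noncomputable section

/-- A finite subgraph of the infinite path `Path_ℤ`, identified with its (finite) edge set: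
the integer `i` encodes the edge `{i-1, i}` of `Path_ℤ`. -/
abbrev PGraph := Finset ℤ

/-- The connected component of the edge `i` in `G`: all edges `j ∈ G` such that every edge
lying between `i` and `j` also belongs to `G`. -/
def comp (G : PGraph) (i : ℤ) : PGraph :=
  G.filter fun j => ∀ l ∈ Finset.Icc (min i j) (max i j), l ∈ G

/-- `Δ(G)`: the number of connected components of `G`. -/
def Delta (G : PGraph) : ℕ := (G.filter fun i => i - 1 ∉ G).card

/-- `λ(G)`: the maximum number of edges of a connected component of `G`. -/
def lam (G : PGraph) : ℕ := G.sup fun i => (comp G i).card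

/-- `G ⊖ F`: the union of the connected components of `G` that are vertex-disjoint from `F`.
(The edges `{i-1,i}` and `{f-1,f}` share a vertex iff `|i - f| ≤ 1`.) -/
def ominus (G F : PGraph) : PGraph :=
  G.filter fun i => ∀ j ∈ comp G i, ∀ f ∈ F, 1 < (j - f).natAbs

/-- `Path_k`: the subgraph of `Path_ℤ` with edges `{i-1,i}` for `1 ≤ i ≤ k`. -/
def pathk (k : ℕ) : PGraph := Finset.Icc 1 (k : ℤ)

/-- `Δ⃗(G_1,…,G_m ∣ F)`. -/
def dvecFrom : PGraph → List PGraph → ℕ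
  | _, [] => 0
  | F, G :: L => Delta (ominus G F) + dvecFrom (F ∪ G) L

/-- `Δ⃗(G_1,…,G_m)`. -/
def dvec (L : List PGraph) : ℕ := dvecFrom ∅ L

def lvecFrom : PGraph → List PGraph → ℕ
  | _, [] => 0
  | F, G :: L => lam (ominus G F) + lvecFrom (F ∪ G) L

/-- `λ⃗(G_1,…,G_m)`. -/
def lvec (L : List PGraph) : ℕ := lvecFrom ∅ L

def ldvecFrom : PGraph → List PGraph → ℕ
  | _, [] => 0
  | F, G :: L => lam (ominus G F) * Delta (ominus G F) + ldvecFrom (F ∪ G) L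

/-- `λΔ⃗(G_1,…,G_m)`. -/
def ldvec (L : List PGraph) : ℕ := ldvecFrom ∅ L

/-- The sequence `G_1, …, G_m` as a list. -/
def seqList {m : ℕ} (G : Fin m → PGraph) : List PGraph := (List.finRange m).map G

/-- `G_1 ∪ ⋯ ∪ G_{j-1}` (the union of the entries strictly before `j`). -/
def unionBelow {m : ℕ} (G : Fin m → PGraph) (j : Fin m) : PGraph :=
  (Finset.univ.filter fun i => i < j).biUnion G

/-- A shift permutation: `σ(j) ≥ j - 1` for all `j`. -/
def IsShiftPerm {m : ℕ} (σ : Equiv.Perm (Fin m)) : Prop :=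
  ∀ j : Fin m, (j : ℕ) ≤ (σ j : ℕ) + 1

/-- The shift permutation `σ_I` (as a function) associated with a set `I` of indices
(0-indexed; in the intended use `I` contains the last index): `σ_I(j)` is the least element
of `I` that is `≥ j` when `j = 0` or `j - 1 ∈ I`, and `j - 1` otherwise. -/
def sigmaFun {m : ℕ} (I : Finset (Fin m)) (j : Fin m) : Fin m :=
  if (j : ℕ) = 0 ∨ ∃ i ∈ I, (i : ℕ) + 1 = (j : ℕ) then
    WithTop.untopD j (I.filter fun a => j ≤ a).min
  else ⟨(j : ℕ) - 1, lt_of_le_of_lt (Nat.sub_le _ 1) j.isLt⟩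

/-- The index set `Ĩ_j` of the induced shift permutation `σ̃_j`: if `j ∈ I`, add all indices
up to the predecessor of `j` in `I`; if `j ∉ I`, add all indices below `j`. -/
def tildeI {m : ℕ} (I : Finset (Fin m)) (j : Fin m) : Finset (Fin m) :=
  if j ∈ I then I ∪ Finset.univ.filter fun a => ∃ b ∈ I, b < j ∧ a ≤ b
  else I ∪ Finset.univ.filter fun a => a < j

/-- The induced shift permutation `σ̃_j := σ_{Ĩ_j}` (as a function). -/
def sigmaTilde {m : ℕ} (I : Finset (Fin m)) (j : Fin m) : Fin m → Fin m :=
  sigmaFun (tildeI I j)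


/-!
Since `Δ⃗ = 1`, only the first nonempty graph `G_{t₀}` contributes: it is an interval
`[a₀, b₀]` with `b₀ - a₀ + 1 ≤ λ := max_j λ(G_j)`, and every component of a later graph touches
the graphs before it. So one of the sides `(b₀, k]` and `[1, a₀)` has length `≥ (k - λ)/2`;
after the reflection `x ↦ -x` it is the right one. The first graph reaching beyond a point `p` has
a component `[l, x]` with `l ≤ p + 1 < x` and `x` the largest edge so far. Covering `(b₀, k]`
greedily by such components and keeping every other one gives pairwise separated components of
total length `≥ (k - b₀)/2`. For `I` their indices together with `m`, the permutation `σ_I` puts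
each of them right after the graphs up to its predecessor in `I`, which all lie left of it, so
each survives whole in `λ⃗(G_{σ(1)}, …)`. The bound on `Δ⃗` holds for every `I`: any reordering of
a nonempty family has `Δ⃗ ≥ 1`.
-/

open Finset
open scoped Pointwise

lemma mem_comp_iff_Icc_subset {A : PGraph} {i j : ℤ} :
    j ∈ comp A i ↔ Icc (min i j) (max i j) ⊆ A := by
  simp only [comp, mem_filter, subset_iff]
  exact ⟨fun h => h.2, fun h => ⟨h (by simp [mem_Icc]), h⟩⟩

lemma comp_subset (A : PGraph) (i : ℤ) : comp A i ⊆ A := filter_subset _ _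

lemma mem_comp_self {A : PGraph} {i : ℤ} (h : i ∈ A) : i ∈ comp A i := by
  simpa [mem_comp_iff_Icc_subset] using h

lemma mem_comp_trans {A : PGraph} {i j l : ℤ} (hj : j ∈ comp A i) (hl : l ∈ comp A j) :
    l ∈ comp A i := by
  rw [mem_comp_iff_Icc_subset] at *
  intro z hz
  rw [mem_Icc] at hz
  by_cases hzi : min i j ≤ z ∧ z ≤ max i j
  · exact hj (mem_Icc.2 hzi)
  · exact hl (mem_Icc.2 (by omega))

lemma Icc_subset_comp {A : PGraph} {a b i : ℤ} (hsub : Icc a b ⊆ A) (hi : i ∈ Icc a b) :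
    Icc a b ⊆ comp A i := by
  intro x hx
  rw [mem_Icc] at hi hx
  exact mem_comp_iff_Icc_subset.2 ((Icc_subset_Icc (by omega) (by omega)).trans hsub)

lemma card_comp_le_lam {A : PGraph} {i : ℤ} (h : i ∈ A) : (comp A i).card ≤ lam A :=
  le_sup (f := fun i => (comp A i).card) h

lemma comp_subset_comp_ominus {A F : PGraph} {x : ℤ}
    (hF : ∀ e ∈ comp A x, ∀ f ∈ F, 1 < (e - f).natAbs) : comp A x ⊆ comp (ominus A F) x := by
  have hsub : comp A x ⊆ ominus A F := fun y hy =>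
    mem_filter.2 ⟨comp_subset A x hy, fun e he => hF e (mem_comp_trans hy he)⟩
  intro y hy
  refine mem_comp_iff_Icc_subset.2 fun z hz => hsub ?_
  have hIcc := mem_comp_iff_Icc_subset.1 hy
  exact Icc_subset_comp hIcc (by simp [mem_Icc]) hz

lemma card_comp_le_lam_ominus {A F : PGraph} {x : ℤ} (hx : x ∈ A)
    (hF : ∀ e ∈ comp A x, ∀ f ∈ F, 1 < (e - f).natAbs) :
    (comp A x).card ≤ lam (ominus A F) := by
  have hxF : x ∈ comp (ominus A F) x := comp_subset_comp_ominus hF (mem_comp_self hx)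
  exact (card_le_card (comp_subset_comp_ominus hF)).trans
    (card_comp_le_lam (comp_subset _ x hxF))

/-- Junk value `x` when `x ∉ A`. -/
def leftEnd (A : PGraph) (x : ℤ) : ℤ := (comp A x).min.untopD x

lemma leftEnd_mem_comp {A : PGraph} {x : ℤ} (hx : x ∈ A) : leftEnd A x ∈ comp A x := by
  obtain ⟨a, ha⟩ := min_of_mem (mem_comp_self hx)
  rw [leftEnd, ha, WithTop.untopD_coe]
  exact mem_of_min ha

lemma leftEnd_le {A : PGraph} {x e : ℤ} (he : e ∈ comp A x) : leftEnd A x ≤ e := by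
  obtain ⟨a, ha⟩ := min_of_mem he
  rw [leftEnd, ha, WithTop.untopD_coe]
  exact WithTop.coe_le_coe.1 (ha ▸ min_le he)

lemma sub_leftEnd_add_one_le_card_comp {A : PGraph} {x : ℤ} (hx : x ∈ A) :
    x - leftEnd A x + 1 ≤ (comp A x).card := by
  have hl := leftEnd_mem_comp hx
  have hle : leftEnd A x ≤ x := leftEnd_le (mem_comp_self hx)
  have hsub : Icc (leftEnd A x) x ⊆ comp A x := by
    refine Icc_subset_comp ?_ (right_mem_Icc.2 hle)
    simpa [min_eq_right hle, max_eq_left hle] using mem_comp_iff_Icc_subset.1 hl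
  have := card_le_card hsub
  rw [Int.card_Icc] at this
  omega

/-- A gap `z ∉ A` between two edges of `A` would make both `min A` and the first edge above `z`
left ends of components. -/
lemma mem_of_Delta_le_one {A : PGraph} (h : Delta A ≤ 1) {x y z : ℤ} (hx : x ∈ A) (hy : y ∈ A)
    (hz : z ∈ Icc x y) : z ∈ A := by
  by_contra hzA
  rw [mem_Icc] at hz
  have hne : (A.filter (z < ·)).Nonempty :=
    ⟨y, mem_filter.2 ⟨hy, lt_of_le_of_ne hz.2 fun e => hzA (e ▸ hy)⟩⟩
  obtain ⟨w, hw, hwmin⟩ : ∃ w ∈ A.filter (z < ·), ∀ v ∈ A.filter (z < ·), w ≤ v :=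
    ⟨_, min'_mem _ hne, fun v hv => min'_le _ _ hv⟩
  obtain ⟨hwA, hzw⟩ := mem_filter.1 hw
  have hw1 : w - 1 ∉ A := fun hw1 => by
    have hzw' : z < w - 1 := lt_of_le_of_ne (by omega) fun e => hzA (e ▸ hw1)
    have := hwmin _ (mem_filter.2 ⟨hw1, hzw'⟩)
    omega
  have hA : A.Nonempty := ⟨x, hx⟩
  have hmin : A.min' hA - 1 ∉ A := fun hm => by have := min'_le _ _ hm; omega
  have hmx : A.min' hA ≤ x := min'_le _ _ hx
  have : 1 < Delta A := one_lt_card.2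
    ⟨_, mem_filter.2 ⟨min'_mem _ _, hmin⟩, w, mem_filter.2 ⟨hwA, hw1⟩, by omega⟩
  omega

lemma sub_add_one_le_lam_of_Delta_le_one {A : PGraph} (h : Delta A ≤ 1) {x y : ℤ}
    (hx : x ∈ A) (hy : y ∈ A) (hxy : x ≤ y) : y - x + 1 ≤ lam A := by
  have hsub : Icc x y ⊆ comp A x :=
    Icc_subset_comp (fun z hz => mem_of_Delta_le_one h hx hy hz) (left_mem_Icc.2 hxy)
  have := (card_le_card hsub).trans (card_comp_le_lam hx)
  rw [Int.card_Icc] at this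
  omega

lemma one_le_Delta {A : PGraph} (h : A.Nonempty) : 1 ≤ Delta A :=
  card_pos.2 ⟨A.min' h, mem_filter.2 ⟨min'_mem _ _, fun hm => by have := min'_le _ _ hm; omega⟩⟩

lemma ominus_empty (A : PGraph) : ominus A ∅ = A := by
  simp [ominus]

lemma eq_empty_of_Delta_eq_zero {A : PGraph} (h : Delta A = 0) : A = ∅ := by
  by_contra hA
  have := one_le_Delta (nonempty_iff_ne_empty.2 hA)
  omega

def vecFrom (f : PGraph → ℕ) : PGraph → List PGraph → ℕ
  | _, [] => 0
  | F, G :: L => f (ominus G F) + vecFrom f (F ∪ G) L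

lemma dvecFrom_eq_vecFrom : dvecFrom = vecFrom Delta := by
  funext F L
  induction L generalizing F <;> simp [dvecFrom, vecFrom, *]

lemma lvecFrom_eq_vecFrom : lvecFrom = vecFrom lam := by
  funext F L
  induction L generalizing F <;> simp [lvecFrom, vecFrom, *]

lemma unionBelow_succ {n : ℕ} (G : Fin (n + 1) → PGraph) (j : Fin n) :
    unionBelow G j.succ = G 0 ∪ unionBelow (fun t => G t.succ) j := by
  ext x
  simp only [unionBelow, mem_biUnion, mem_filter, mem_univ, true_and, mem_union]
  constructor
  · rintro ⟨i, hi, hx⟩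
    rcases Fin.eq_zero_or_eq_succ i with rfl | ⟨i, rfl⟩
    · exact Or.inl hx
    · exact Or.inr ⟨i, Fin.succ_lt_succ_iff.1 hi, hx⟩
  · rintro (hx | ⟨i, hi, hx⟩)
    · exact ⟨0, Fin.succ_pos j, hx⟩
    · exact ⟨i.succ, Fin.succ_lt_succ_iff.2 hi, hx⟩

lemma vecFrom_seqList (f : PGraph → ℕ) {n : ℕ} (G : Fin n → PGraph) (F : PGraph) :
    vecFrom f F (seqList G) = ∑ j, f (ominus (G j) (F ∪ unionBelow G j)) := by
  induction n generalizing F with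
  | zero => simp [seqList, vecFrom]
  | succ n ih =>
    have h0 : unionBelow G 0 = ∅ := by simp [unionBelow]
    rw [seqList, List.finRange_succ, List.map_cons, List.map_map, Fin.sum_univ_succ, vecFrom]
    simp only [h0, union_empty, unionBelow_succ, ← union_assoc]
    exact congrArg _ (ih (fun t => G t.succ) (F ∪ G 0))

lemma dvec_eq_sum {n : ℕ} (G : Fin n → PGraph) :
    dvec (seqList G) = ∑ j, Delta (ominus (G j) (unionBelow G j)) := by
  simp [dvec, dvecFrom_eq_vecFrom, vecFrom_seqList]

lemma lvec_eq_sum {n : ℕ} (G : Fin n → PGraph) :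
    lvec (seqList G) = ∑ j, lam (ominus (G j) (unionBelow G j)) := by
  simp [lvec, lvecFrom_eq_vecFrom, vecFrom_seqList]

lemma one_le_dvecFrom_empty (L : List PGraph) (h : ∃ A ∈ L, A.Nonempty) :
    1 ≤ dvecFrom ∅ L := by
  induction L with
  | nil => simp at h
  | cons A L ih =>
    rw [dvecFrom, empty_union]
    rcases A.eq_empty_or_nonempty with rfl | hA
    · obtain ⟨B, hB, hBne⟩ := h
      rcases List.mem_cons.1 hB with rfl | hB
      · simp at hBne
      · exact (ih ⟨B, hB, hBne⟩).trans (Nat.le_add_left _ _)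
    · simpa [ominus_empty] using (one_le_Delta hA).trans (Nat.le_add_right _ _)

section ShiftPermutation

variable {n : ℕ} {I : Finset (Fin n)}

lemma sigmaFun_eq_min' {j : Fin n} (h : (j : ℕ) = 0 ∨ ∃ i ∈ I, (i : ℕ) + 1 = j)
    (hne : (I.filter (j ≤ ·)).Nonempty) : sigmaFun I j = (I.filter (j ≤ ·)).min' hne := by
  rw [sigmaFun, if_pos h, ← coe_min' hne, WithTop.untopD_coe]

lemma eq_zero_or_pred_mem_of_sigmaFun_mem {p : Fin n} (hp : sigmaFun I p ∈ I) :
    (p : ℕ) = 0 ∨ ∃ i ∈ I, (i : ℕ) + 1 = p := by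
  by_contra h
  rw [sigmaFun, if_neg h] at hp
  push Not at h
  exact h.2 _ hp (by simp only; omega)

lemma sigmaFun_le {c j : Fin n} (hc : c ∈ I) (hj : j ≤ c) : sigmaFun I j ≤ c := by
  by_cases h : (j : ℕ) = 0 ∨ ∃ i ∈ I, (i : ℕ) + 1 = j
  · have hc' : c ∈ I.filter (j ≤ ·) := mem_filter.2 ⟨hc, hj⟩
    rw [sigmaFun_eq_min' h ⟨c, hc'⟩]
    exact min'_le _ _ hc'
  · rw [sigmaFun, if_neg h, Fin.le_def]
    rw [Fin.le_def] at hj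
    exact (Nat.sub_le _ _).trans hj

/-- Every `t ∈ I` is hit at the least `p` such that no element of `I` lies in `[p, t)`. -/
lemma exists_sigmaFun_eq_of_mem {t : Fin n} (ht : t ∈ I) : ∃ p, sigmaFun I p = t := by
  set s := univ.filter fun p => ∀ b ∈ I, p ≤ b → t ≤ b
  have hs : s.Nonempty := ⟨t, mem_filter.2 ⟨mem_univ _, fun _ _ h => h⟩⟩
  obtain ⟨-, hp⟩ := mem_filter.1 (min'_mem s hs)
  set p := s.min' hs
  have hpt : p ≤ t := min'_le _ _ (mem_filter.2 ⟨mem_univ _, fun _ _ h => h⟩)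
  have hcond : (p : ℕ) = 0 ∨ ∃ i ∈ I, (i : ℕ) + 1 = p := by
    by_contra! h
    have hq : (⟨(p : ℕ) - 1, by omega⟩ : Fin n) ∉ s := fun hq => by
      have := min'_le _ _ hq
      rw [Fin.le_def] at this
      simp only at this
      omega
    simp only [s, mem_filter, mem_univ, true_and, not_forall] at hq
    obtain ⟨b, hb, hqb, hbt⟩ := hq
    rw [Fin.le_def] at hqb
    simp only at hqb
    rcases Nat.lt_or_ge (b : ℕ) p with hbp | hbp
    · exact h.2 b hb (by omega)
    · exact hbt (hp b hb (Fin.le_def.2 hbp))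
  have hne : (I.filter (p ≤ ·)).Nonempty := ⟨t, mem_filter.2 ⟨ht, hpt⟩⟩
  refine ⟨p, (sigmaFun_eq_min' hcond hne).trans (le_antisymm ?_ ?_)⟩
  · exact min'_le _ _ (mem_filter.2 ⟨ht, hpt⟩)
  · exact le_min' _ _ _ fun b hb => hp b (mem_filter.1 hb).1 (mem_filter.1 hb).2

end ShiftPermutation

lemma sigmaFun_bijective {m : ℕ} {I : Finset (Fin (m + 1))} (hlast : Fin.last m ∈ I) :
    Function.Bijective (sigmaFun I) := by
  refine (Finite.injective_iff_bijective).1 (Finite.injective_iff_surjective.2 fun t => ?_)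
  by_cases ht : t ∈ I
  · exact exists_sigmaFun_eq_of_mem ht
  · have htm : (t : ℕ) < m := by
      have : (t : ℕ) ≠ m := fun h => ht (Fin.ext (h.trans (Fin.val_last m).symm) ▸ hlast)
      omega
    refine ⟨⟨t + 1, by omega⟩, ?_⟩
    rw [sigmaFun, if_neg]
    · ext
      simp
    · push Not
      exact ⟨by simp, fun i hi h => ht ((Fin.ext (by simpa using h) : i = t) ▸ hi)⟩

lemma image_sigmaFun_filter_lt {m : ℕ} {I : Finset (Fin (m + 1))} (hlast : Fin.last m ∈ I)
    {p : Fin (m + 1)} (hp : (p : ℕ) = 0 ∨ ∃ i ∈ I, (i : ℕ) + 1 = p) :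
    (univ.filter (· < p)).image (sigmaFun I) = univ.filter (· < p) := by
  rcases hp with hp | ⟨i, hi, hip⟩
  · have : univ.filter (· < p) = ∅ := by
      ext t
      simp [Fin.lt_def, hp]
    simp [this]
  refine eq_of_subset_of_card_le (fun x hx => ?_) ?_
  · obtain ⟨t, ht, rfl⟩ := mem_image.1 hx
    have hti : t ≤ i := by
      rw [mem_filter, Fin.lt_def] at ht
      exact Fin.le_def.2 (by omega)
    have := sigmaFun_le hi hti
    exact mem_filter.2 ⟨mem_univ _, Fin.lt_def.2 (by rw [Fin.le_def] at this; omega)⟩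
  · rw [card_image_of_injective _ (sigmaFun_bijective hlast).1]

/-- The indices `t ≤ b` for some `b ∈ I` below `a`; for `a = i_h ∈ I` this is
`{1, …, i_{h-1}}`, the set of indices that `σ_I` places before `a`. -/
def predPrefix {n : ℕ} (I : Finset (Fin n)) (a : Fin n) : Finset (Fin n) :=
  univ.filter fun t => ∃ b ∈ I, t ≤ b ∧ b < a

lemma predPrefix_sigmaFun {m : ℕ} {I : Finset (Fin (m + 1))} (hlast : Fin.last m ∈ I)
    {p : Fin (m + 1)} (hp : sigmaFun I p ∈ I) :
    predPrefix I (sigmaFun I p) = (univ.filter (· < p)).image (sigmaFun I) := by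
  have hcond := eq_zero_or_pred_mem_of_sigmaFun_mem hp
  rw [image_sigmaFun_filter_lt hlast hcond]
  have hne : (I.filter (p ≤ ·)).Nonempty := ⟨_, mem_filter.2 ⟨hlast, Fin.le_last p⟩⟩
  have hσ := sigmaFun_eq_min' hcond hne
  have hpσ : p ≤ sigmaFun I p := hσ ▸ (mem_filter.1 (min'_mem _ hne)).2
  have hσmin : ∀ b ∈ I, p ≤ b → sigmaFun I p ≤ b := fun b hb hpb =>
    hσ ▸ min'_le _ _ (mem_filter.2 ⟨hb, hpb⟩)
  ext t
  simp only [predPrefix, mem_filter, mem_univ, true_and]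
  constructor
  · rintro ⟨b, hb, htb, hba⟩
    exact lt_of_le_of_lt htb (lt_of_not_ge fun hpb => (hσmin b hb hpb).not_gt hba)
  · intro htp
    obtain ⟨i, hi, hip⟩ := hcond.resolve_left (by rw [Fin.lt_def] at htp; omega)
    refine ⟨i, hi, Fin.le_def.2 ?_, lt_of_lt_of_le (Fin.lt_def.2 ?_) hpσ⟩ <;>
      rw [Fin.lt_def] at htp <;> omega

lemma sum_lam_ominus_predPrefix_le_lvec {m : ℕ} {I : Finset (Fin (m + 1))}
    (hlast : Fin.last m ∈ I) (G : Fin (m + 1) → PGraph) :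
    ∑ a ∈ I, lam (ominus (G a) ((predPrefix I a).biUnion G)) ≤
      lvec (seqList fun p => G (sigmaFun I p)) := by
  classical
  set g : Fin (m + 1) → ℕ := fun a =>
    if a ∈ I then lam (ominus (G a) ((predPrefix I a).biUnion G)) else 0
  calc ∑ a ∈ I, lam (ominus (G a) ((predPrefix I a).biUnion G))
      = ∑ p, g (sigmaFun I p) := by
        rw [show ∑ p, g (sigmaFun I p) = ∑ a, g a from
          (Equiv.ofBijective _ (sigmaFun_bijective hlast)).sum_comp g, ← sum_filter]
        simp
    _ ≤ _ := by
        rw [lvec_eq_sum]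
        refine sum_le_sum fun p _ => ?_
        simp only [g]
        split_ifs with hp
        · rw [predPrefix_sigmaFun hlast hp, image_biUnion]
          rfl
        · exact Nat.zero_le _

section IntervalCover

variable {ι : Type*} [DecidableEq ι] (l r : ι → ℤ)

/-- Greedy covering of `(p, hi]`: choose, among the intervals `[l a, r a]` starting at `≤ p + 1`,
one reaching furthest, and continue from its right end. The intervals chosen at odd steps and those
chosen at even steps form `T₁` and `T₂`; each is separated, since the interval chosen two steps
after `c` was not eligible in place of the one right after `c`. -/
lemma exists_two_separated_chains (S : Finset ι) (hi p : ℤ)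
    (hcover : ∀ q, p ≤ q → q < hi → ∃ a ∈ S, l a ≤ q + 1 ∧ q < r a) :
    ∃ T₁ ⊆ S, ∃ T₂ ⊆ S,
      (T₁ : Set ι).Pairwise (fun a b => r a + 2 ≤ l b ∨ r b + 2 ≤ l a) ∧
      (T₂ : Set ι).Pairwise (fun a b => r a + 2 ≤ l b ∨ r b + 2 ≤ l a) ∧
      (∀ a ∈ T₁, p < r a) ∧ (∀ a ∈ T₂, p + 2 ≤ l a ∧ p < r a) ∧
      hi - p ≤ ∑ a ∈ T₁, (r a - l a + 1) + ∑ a ∈ T₂, (r a - l a + 1) := by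
  by_cases hp : hi ≤ p
  · refine ⟨∅, empty_subset _, ∅, empty_subset _, by simp, by simp, by simp, by simp, ?_⟩
    simp only [sum_empty]
    omega
  push Not at hp
  obtain ⟨a, haS, hla, hra⟩ := hcover p le_rfl hp
  have ha : a ∈ S.filter fun a => l a ≤ p + 1 := mem_filter.2 ⟨haS, hla⟩
  obtain ⟨c, hc, hcmax⟩ := exists_max_image _ r ⟨a, ha⟩
  obtain ⟨hcS, hlc⟩ := mem_filter.1 hc
  have hrc : p < r c := hra.trans_le (hcmax a ha)
  obtain ⟨T₁, hT₁, T₂, hT₂, hs₁, hs₂, hr₁, hl₂, hsum⟩ :=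
    exists_two_separated_chains S hi (r c) fun q hq => hcover q (by omega)
  have hcT₂ : c ∉ T₂ := fun h => by have := (hl₂ c h).1; omega
  refine ⟨insert c T₂, insert_subset hcS hT₂, T₁, hT₁, ?_, hs₁, ?_, ?_, ?_⟩
  · rw [coe_insert, Set.pairwise_insert]
    exact ⟨hs₂, fun b hb _ => ⟨Or.inl (hl₂ b hb).1, Or.inr (hl₂ b hb).1⟩⟩
  · intro b hb
    rcases mem_insert.1 hb with rfl | hb
    · exact hrc
    · exact hrc.trans (hl₂ b hb).2
  · intro b hb
    refine ⟨?_, hrc.trans (hr₁ b hb)⟩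
    by_contra h
    have := hcmax b (mem_filter.2 ⟨hT₁ hb, by omega⟩)
    linarith [hr₁ b hb]
  · rw [sum_insert hcT₂]
    linarith
termination_by (hi - p).toNat

lemma exists_separated_subset_of_cover (S : Finset ι) (lo hi : ℤ)
    (hcover : ∀ p, lo ≤ p → p < hi → ∃ a ∈ S, l a ≤ p + 1 ∧ p < r a) :
    ∃ T ⊆ S, (T : Set ι).Pairwise (fun a b => r a + 2 ≤ l b ∨ r b + 2 ≤ l a) ∧
      hi - lo ≤ 2 * ∑ a ∈ T, (r a - l a + 1) := by
  obtain ⟨T₁, hT₁, T₂, hT₂, hs₁, hs₂, -, -, hsum⟩ :=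
    exists_two_separated_chains l r S hi lo hcover
  rcases le_total (∑ a ∈ T₁, (r a - l a + 1)) (∑ a ∈ T₂, (r a - l a + 1)) with h | h
  · exact ⟨T₂, hT₂, hs₂, by linarith⟩
  · exact ⟨T₁, hT₁, hs₁, by linarith⟩

end IntervalCover

def IsRecord {n : ℕ} (G : Fin n → PGraph) (a : Fin n) (x : ℤ) : Prop :=
  x ∈ G a ∧ ∀ t ≤ a, ∀ f ∈ G t, f ≤ x

/-- Take the first graph `G a` reaching beyond `p`: its largest edge is a record, and since its
component must touch the earlier graphs, which all stay `≤ p`, this component starts at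
`≤ p + 1`. -/
lemma exists_record_of_touch {n : ℕ} {G : Fin n → PGraph} {t0 : Fin n}
    (htouch : ∀ j ≠ t0, ominus (G j) (unionBelow G j) = ∅) {b0 p : ℤ}
    (hb0 : ∀ x ∈ G t0, x ≤ b0) (hp : b0 ≤ p) (hcov : ∃ a, p + 1 ∈ G a) :
    ∃ a x, IsRecord G a x ∧ p < x ∧ leftEnd (G a) x ≤ p + 1 := by
  classical
  set s := univ.filter fun a => ∃ y ∈ G a, p < y
  have hs : s.Nonempty := by
    obtain ⟨a, ha⟩ := hcov
    exact ⟨a, mem_filter.2 ⟨mem_univ _, p + 1, ha, by omega⟩⟩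
  obtain ⟨-, y, hy, hpy⟩ := mem_filter.1 (min'_mem s hs)
  set a := s.min' hs
  have hbelow : ∀ t < a, ∀ f ∈ G t, f ≤ p := fun t ht f hf => by
    by_contra! h
    exact (min'_le s t (mem_filter.2 ⟨mem_univ _, f, hf, h⟩)).not_gt ht
  have hya : y ≤ (G a).max' ⟨y, hy⟩ := le_max' _ _ hy
  refine ⟨a, _, ⟨max'_mem _ _, fun t ht f hf => ?_⟩, hpy.trans_le hya, ?_⟩
  · rcases ht.lt_or_eq with ht | rfl
    · linarith [hbelow t ht f hf]
    · exact le_max' _ _ hf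
  · have hat0 : a ≠ t0 := by
      rintro rfl
      linarith [hb0 y hy]
    have hx : (G a).max' ⟨y, hy⟩ ∉ ominus (G a) (unionBelow G a) := by
      rw [htouch a hat0]
      exact notMem_empty _
    simp only [ominus, mem_filter, not_and, not_forall, not_lt] at hx
    obtain ⟨e, he, f, hf, hef⟩ := hx (max'_mem _ _)
    obtain ⟨t, ht, hft⟩ := mem_biUnion.1 hf
    have := hbelow t (mem_filter.1 ht).2 f hft
    have := leftEnd_le he
    omega

lemma sum_le_lvec_of_separated_records {m : ℕ} {G : Fin (m + 1) → PGraph}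
    (T : Finset (Fin (m + 1) × ℤ)) (hT : ∀ q ∈ T, IsRecord G q.1 q.2)
    (hsep : (T : Set (Fin (m + 1) × ℤ)).Pairwise fun q q' =>
      q.2 + 2 ≤ leftEnd (G q'.1) q'.2 ∨ q'.2 + 2 ≤ leftEnd (G q.1) q.2) :
    ∑ q ∈ T, (q.2 - leftEnd (G q.1) q.2 + 1) ≤
      (lvec (seqList fun p => G (sigmaFun (insert (Fin.last m) (T.image Prod.fst)) p)) : ℤ) := by
  classical
  set I := insert (Fin.last m) (T.image Prod.fst)
  have hinj : Set.InjOn Prod.fst (T : Set (Fin (m + 1) × ℤ)) := fun q hq q' hq' h =>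
    Prod.ext h (le_antisymm ((hT q' hq').2 _ h.le _ (hT q hq).1)
      ((hT q hq).2 _ h.ge _ (hT q' hq').1))
  have hterm : ∀ q ∈ T, q.2 - leftEnd (G q.1) q.2 + 1 ≤
      lam (ominus (G q.1) ((predPrefix I q.1).biUnion G)) := by
    intro q hq
    obtain ⟨hx, hmax⟩ := hT q hq
    refine (sub_leftEnd_add_one_le_card_comp hx).trans
      (Nat.cast_le.2 (card_comp_le_lam_ominus hx fun e he f hf => ?_))
    -- `f` lies in a graph up to the predecessor `q'.1` of `q.1` in `I`, so `f ≤ q'.2`.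
    suffices f + 2 ≤ leftEnd (G q.1) q.2 by
      have := leftEnd_le he
      omega
    obtain ⟨t, ht, hft⟩ := mem_biUnion.1 hf
    obtain ⟨b, hbI, htb, hba⟩ := (mem_filter.1 ht).2
    obtain ⟨q', hq', rfl⟩ : ∃ q' ∈ T, q'.1 = b := by
      rcases mem_insert.1 hbI with rfl | hb
      · exact absurd (hba.trans_le (Fin.le_last _)) (lt_irrefl _)
      · exact mem_image.1 hb
    have hfq' : f ≤ q'.2 := (hT q' hq').2 t htb f hft
    have hq'q : q'.2 ≤ q.2 := hmax _ hba.le _ (hT q' hq').1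
    rcases hsep hq' hq fun h => hba.ne (congrArg Prod.fst h) with h | h
    · omega
    · have := leftEnd_le (mem_comp_self (hT q' hq').1)
      omega
  set μ : Fin (m + 1) → ℤ := fun a => lam (ominus (G a) ((predPrefix I a).biUnion G))
  calc ∑ q ∈ T, (q.2 - leftEnd (G q.1) q.2 + 1)
      ≤ ∑ q ∈ T, μ q.1 := sum_le_sum hterm
    _ = ∑ a ∈ T.image Prod.fst, μ a := (sum_image (f := μ) hinj).symm
    _ ≤ ∑ a ∈ I, μ a :=
        sum_le_sum_of_subset_of_nonneg (subset_insert _ _) fun _ _ _ => Nat.cast_nonneg _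
    _ ≤ _ := by
        simp only [μ]
        exact_mod_cast sum_lam_ominus_predPrefix_le_lvec (mem_insert_self _ _) G

lemma exists_lvec_ge_of_touch {m : ℕ} (G : Fin (m + 1) → PGraph) (t0 : Fin (m + 1))
    (htouch : ∀ j ≠ t0, ominus (G j) (unionBelow G j) = ∅) {b0 hi : ℤ}
    (hb0 : ∀ x ∈ G t0, x ≤ b0) (hcov : ∀ x, b0 < x → x ≤ hi → ∃ a, x ∈ G a) :
    ∃ I : Finset (Fin (m + 1)), Fin.last m ∈ I ∧
      hi - b0 ≤ 2 * (lvec (seqList fun p => G (sigmaFun I p)) : ℤ) := by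
  classical
  set S := (univ ×ˢ univ.biUnion G).filter fun q => IsRecord G q.1 q.2
  obtain ⟨T, hTS, hsep, hbound⟩ :=
    exists_separated_subset_of_cover (fun q => leftEnd (G q.1) q.2) Prod.snd S b0 hi
      fun p hp hpi => by
        obtain ⟨a, x, hrec, hpx, hl⟩ :=
          exists_record_of_touch htouch hb0 hp (hcov (p + 1) (by omega) (by omega))
        exact ⟨(a, x), mem_filter.2 ⟨mem_product.2 ⟨mem_univ _,
          mem_biUnion.2 ⟨a, mem_univ _, hrec.1⟩⟩, hrec⟩, hl, hpx⟩
  refine ⟨insert (Fin.last m) (T.image Prod.fst), mem_insert_self _ _, ?_⟩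
  have := sum_le_lvec_of_separated_records T (fun q hq => (mem_filter.1 (hTS hq)).2) hsep
  linarith

lemma comp_neg (A : PGraph) (x : ℤ) : comp (-A) (-x) = -comp A x := by
  ext j
  simp only [mem_neg', mem_comp_iff_Icc_subset, subset_iff, mem_Icc]
  constructor
  · intro h z hz
    simpa using h (x := -z) (by omega)
  · intro h z hz
    exact h (by omega)

lemma lam_neg (A : PGraph) : lam (-A) = lam A := by
  simp only [lam, sup_neg]
  exact sup_congr rfl fun i _ => by rw [comp_neg, card_neg]

lemma ominus_neg (A F : PGraph) : ominus (-A) (-F) = -ominus A F := by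
  ext y
  have hc : comp (-A) y = -comp A (-y) := by rw [← comp_neg, neg_neg]
  have habs : ∀ j f : ℤ, (-j - -f).natAbs = (j - f).natAbs := fun j f => by
    rw [show -j - -f = -(j - f) by ring, Int.natAbs_neg]
  simp only [ominus, mem_filter, mem_neg', hc]
  refine and_congr_right fun _ => ⟨fun h j hj f hf => ?_, fun h j hj f hf => ?_⟩
  · have := h (-j) (by rwa [neg_neg]) (-f) (by rwa [neg_neg])
    rwa [habs] at this
  · have := h (-j) hj (-f) hf
    rwa [habs] at this

lemma unionBelow_neg {n : ℕ} (G : Fin n → PGraph) (j : Fin n) :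
    unionBelow (fun a => -G a) j = -unionBelow G j := by
  ext x
  simp [unionBelow]

lemma lvecFrom_neg (F : PGraph) (L : List PGraph) :
    lvecFrom (-F) (L.map (-·)) = lvecFrom F L := by
  induction L generalizing F with
  | nil => rfl
  | cons A L ih =>
    have hunion : -F ∪ -A = -(F ∪ A) := by
      ext
      simp
    simp only [List.map_cons, lvecFrom, ominus_neg, lam_neg, hunion, ih]

lemma lvec_seqList_neg {n : ℕ} (G : Fin n → PGraph) :
    lvec (seqList fun p => -G p) = lvec (seqList G) := by
  rw [lvec, lvec, ← lvecFrom_neg, neg_empty, seqList, seqList, List.map_map]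
  simp [Function.comp_def]

/-- Only the first nonempty graph contributes to `Δ⃗ = 1`. -/
lemma exists_touch_of_dvec_eq_one {n : ℕ} (G : Fin n → PGraph) (h : dvec (seqList G) = 1) :
    ∃ t0, (G t0).Nonempty ∧ Delta (G t0) ≤ 1 ∧ ∀ j ≠ t0, ominus (G j) (unionBelow G j) = ∅ := by
  classical
  rw [dvec_eq_sum] at h
  obtain ⟨t, -, ht⟩ := exists_ne_zero_of_sum_ne_zero (h ▸ one_ne_zero)
  have hs : (univ.filter fun j => (G j).Nonempty).Nonempty := by
    refine ⟨t, mem_filter.2 ⟨mem_univ _, nonempty_iff_ne_empty.2 fun hGt => ht ?_⟩⟩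
    simp [hGt, ominus, Delta]
  obtain ⟨-, hne⟩ := mem_filter.1 (min'_mem _ hs)
  set t0 := (univ.filter fun j => (G j).Nonempty).min' hs
  have hU : unionBelow G t0 = ∅ := by
    refine eq_empty_of_forall_notMem fun x hx => ?_
    obtain ⟨i, hi, hx⟩ := mem_biUnion.1 hx
    exact (min'_le _ i (mem_filter.2 ⟨mem_univ _, x, hx⟩)).not_gt (mem_filter.1 hi).2
  have hsplit := add_sum_erase univ (fun j => Delta (ominus (G j) (unionBelow G j))) (mem_univ t0)
  rw [h, hU, ominus_empty] at hsplit
  have h1 := one_le_Delta hne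
  have hrest : ∑ j ∈ univ.erase t0, Delta (ominus (G j) (unionBelow G j)) = 0 := by omega
  refine ⟨t0, hne, by omega, fun j hj => eq_empty_of_Delta_eq_zero ?_⟩
  exact sum_eq_zero_iff.1 hrest j (mem_erase.2 ⟨hj, mem_univ _⟩)

lemma exists_lvec_ge_of_touch_pathk {k m : ℕ} {G : Fin (m + 1) → PGraph}
    (hcov : univ.biUnion G = pathk k) {t0 : Fin (m + 1)} (hne : (G t0).Nonempty)
    (hΔ : Delta (G t0) ≤ 1) (htouch : ∀ j ≠ t0, ominus (G j) (unionBelow G j) = ∅) :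
    ∃ I : Finset (Fin (m + 1)), Fin.last m ∈ I ∧
      (k : ℤ) - (univ.sup fun j => lam (G j) : ℕ) ≤
        4 * (lvec (seqList fun p => G (sigmaFun I p)) : ℤ) := by
  set a0 := (G t0).min' hne
  set b0 := (G t0).max' hne
  have hspan : b0 - a0 + 1 ≤ (univ.sup fun j => lam (G j) : ℕ) :=
    (sub_add_one_le_lam_of_Delta_le_one hΔ (min'_mem _ _) (max'_mem _ _) (min'_le_max' _ _)).trans
      (Nat.cast_le.2 (le_sup (f := fun j => lam (G j)) (mem_univ t0)))
  have hmem : ∀ x, x ∈ pathk k ↔ ∃ a, x ∈ G a := by simp [← hcov]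
  have ha0 := (hmem a0).2 ⟨t0, min'_mem _ _⟩
  have hb0 := (hmem b0).2 ⟨t0, max'_mem _ _⟩
  simp only [pathk, mem_Icc] at hmem ha0 hb0
  -- `(k - b0) + (a0 - 1) ≥ k - λ`: work on the longer side, the left one after `x ↦ -x`.
  rcases le_total (a0 - 1) (k - b0) with h | h
  · obtain ⟨I, hI, hlam⟩ := exists_lvec_ge_of_touch G t0 htouch (b0 := b0) (hi := k)
      (fun x hx => le_max' _ x hx) fun x hx hxk => (hmem x).1 ⟨by omega, hxk⟩
    exact ⟨I, hI, by omega⟩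
  · have htouch' : ∀ j ≠ t0, ominus (-G j) (unionBelow (fun a => -G a) j) = ∅ := fun j hj => by
      rw [unionBelow_neg, ominus_neg, htouch j hj, neg_empty]
    obtain ⟨I, hI, hlam⟩ := exists_lvec_ge_of_touch (fun a => -G a) t0 htouch' (b0 := -a0)
      (hi := -1) (fun x hx => le_neg.2 (min'_le _ _ (mem_neg'.1 hx)))
      fun x hx hx1 => by simpa using (hmem (-x)).1 ⟨by omega, by omega⟩
    rw [lvec_seqList_neg (fun p => G (sigmaFun I p))] at hlam
    exact ⟨I, hI, by omega⟩

lemma one_le_dvec_sigmaFun {m : ℕ} {I : Finset (Fin (m + 1))} (hlast : Fin.last m ∈ I)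
    {G : Fin (m + 1) → PGraph} {t : Fin (m + 1)} (ht : (G t).Nonempty) :
    1 ≤ dvec (seqList fun p => G (sigmaFun I p)) := by
  obtain ⟨p, hp⟩ := (sigmaFun_bijective hlast).2 t
  exact one_le_dvecFrom_empty _ ⟨G t, List.mem_map.2 ⟨p, List.mem_finRange _, by rw [hp]⟩, ht⟩

lemma subset_tildeI {n : ℕ} (I : Finset (Fin n)) (j : Fin n) : I ⊆ tildeI I j := by
  unfold tildeI
  split_ifs <;> exact subset_union_left

theorem stronger_pre_main_lemma_II_general (k m : ℕ) (G : Fin (m + 1) → PGraph)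
    (hcov : Finset.univ.biUnion G = pathk k)
    (hdvec : dvec (seqList G) = 1) :
    ∃ I : Finset (Fin (m + 1)), Fin.last m ∈ I ∧
      ((k : ℝ) / 8 - (((Finset.univ.sup fun j => lam (G j)) : ℕ) : ℝ) / 2 ≤
        (lvec (seqList fun a => G (sigmaFun I a)) : ℝ)) ∧
      (∀ j : Fin (m + 1),
        (dvec (seqList G) : ℝ) / 2 ≤ (dvec (seqList fun a => G (sigmaTilde I j a)) : ℝ)) := by
  obtain ⟨t0, hne, hΔ, htouch⟩ := exists_touch_of_dvec_eq_one G hdvec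
  obtain ⟨I, hI, hlam⟩ := exists_lvec_ge_of_touch_pathk hcov hne hΔ htouch
  refine ⟨I, hI, ?_, fun j => ?_⟩
  · have : (k : ℝ) - (univ.sup fun j => lam (G j) : ℕ) ≤
        4 * (lvec (seqList fun p => G (sigmaFun I p)) : ℝ) := by exact_mod_cast hlam
    have hL : (0 : ℝ) ≤ (univ.sup fun j => lam (G j) : ℕ) := Nat.cast_nonneg _
    have hk : (0 : ℝ) ≤ k := Nat.cast_nonneg _
    linarith
  · have := one_le_dvec_sigmaFun (subset_tildeI I j hI) hne
    rw [hdvec, sigmaTilde]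
    have : (1 : ℝ) ≤ dvec (seqList fun a => G (sigmaFun (tildeI I j) a)) := by exact_mod_cast this
    linarith

/-- **Lemma 5.7 (stronger Pre-Main Lemma (II)).**  If `G_1 ∪ ⋯ ∪ G_m = Path_k` and
`Δ⃗(G_1,…,G_m) = 1`, then there is a set `I` of indices containing the last one, with
associated shift permutation `σ = σ_I` and induced shift permutations `σ̃_j`, such that
`λ⃗(G_{σ(1)},…,G_{σ(m)}) ≥ k/8 − (max_j λ(G_j))/2`, and
`Δ⃗(G_{σ̃_j(1)},…,G_{σ̃_j(m)}) ≥ Δ⃗(G_1,…,G_m)/2` for all `j`. -/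
theorem stronger_pre_main_lemma_II (k m : ℕ) (hk : 1 ≤ k) (G : Fin (m + 1) → PGraph)
    (hcov : Finset.univ.biUnion G = pathk k)
    (hdvec : dvec (seqList G) = 1) :
    ∃ I : Finset (Fin (m + 1)), Fin.last m ∈ I ∧
      ((k : ℝ) / 8 - (((Finset.univ.sup fun j => lam (G j)) : ℕ) : ℝ) / 2 ≤
        (lvec (seqList fun a => G (sigmaFun I a)) : ℝ)) ∧
      (∀ j : Fin (m + 1),
        (dvec (seqList G) : ℝ) / 2 ≤ (dvec (seqList fun a => G (sigmaTilde I j a)) : ℝ)) :=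
  stronger_pre_main_lemma_II_general k m G hcov hdvec
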